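/- Fix d ≥ 1. There exists a constant c_d > 0 such that the following holds. Let Q ⊂ ℝ^d be an axis-parallel cube of side length ε > 0, and let μ be a finite Borel measure on Q with μ(A) ≤ L · Leb(A) for all Borel sets A, where L > 0, and with total mass μ(Q) = m. Then ∫_Q dist(x, ∂Q) dμ(x) ≥ c_d · m² / (L · ε^{d-1}), where ∂Q is the topological boundary of Q and dist(x, ∂Q) denotes Euclidean distance from x to ∂Q. -/

import Mathlib

open MeasureTheory Set ENNReal

noncomputable section

/-- The closed unit cube `[0,1]^d` in Euclidean space. -/
def unitCube (d : ℕ) : Set (EuclideanSpace ℝ (Fin d)) :=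
  {x | ∀ i, x i ∈ Icc (0 : ℝ) 1}

/-- The open unit cube `(0,1)^d` in Euclidean space. -/
def openUnitCube (d : ℕ) : Set (EuclideanSpace ℝ (Fin d)) :=
  {x | ∀ i, x i ∈ Ioo (0 : ℝ) 1}

/-- Couplings of two measures: measures on the product with the given marginals. -/
def couplings {X : Type*} [MeasurableSpace X] (μ ν : Measure X) : Set (Measure (X × X)) :=
  {γ | γ.map Prod.fst = μ ∧ γ.map Prod.snd = ν}

/-- The 1-Wasserstein (Earth Mover's) distance, as an extended nonnegative real. -/
def W1 {X : Type*} [MeasurableSpace X] [PseudoEMetricSpace X] (μ ν : Measure X) : ℝ≥0∞ :=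
  ⨅ γ ∈ couplings μ ν, ∫⁻ z, edist z.1 z.2 ∂γ

/-- The measure on `[0,1]^d` with density `max (f, 0)` w.r.t. Lebesgue measure. -/
def muPlus (d : ℕ) (f : EuclideanSpace ℝ (Fin d) → ℝ) : Measure (EuclideanSpace ℝ (Fin d)) :=
  (volume.restrict (unitCube d)).withDensity fun x => ENNReal.ofReal (f x)

/-- Volume of an axis-parallel box in Euclidean space. -/
lemma vol_box (d : ℕ) (b c : Fin d → ℝ) :
    volume {x : EuclideanSpace ℝ (Fin d) | ∀ i, x i ∈ Icc (b i) (c i)}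
      = ∏ i, ENNReal.ofReal (c i - b i) := by
  have h : {x : EuclideanSpace ℝ (Fin d) | ∀ i, x i ∈ Icc (b i) (c i)}
      = (MeasurableEquiv.toLp 2 (Fin d → ℝ)).symm ⁻¹' (Set.pi univ fun i => Icc (b i) (c i)) := by
    ext x
    simp only [mem_preimage, Set.mem_univ_pi, mem_setOf_eq]
    rfl
  rw [h, (EuclideanSpace.volume_preserving_symm_measurableEquiv_toLp (Fin d)).measure_preimage
    (MeasurableSet.univ_pi (fun i => measurableSet_Icc)).nullMeasurableSet,
    volume_pi_pi]
  simp [Real.volume_Icc]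

lemma coord_abs_le_dist (d : ℕ) (x y : EuclideanSpace ℝ (Fin d)) (j : Fin d) :
    |x j - y j| ≤ dist x y := by
  rw [EuclideanSpace.dist_eq]
  calc |x j - y j| = Real.sqrt (|x j - y j|^2) := by rw [Real.sqrt_sq_eq_abs]; simp
    _ ≤ _ := by
        apply Real.sqrt_le_sqrt
        exact Finset.single_le_sum (f := fun i => dist (x i) (y i) ^ 2)
          (fun i _ => sq_nonneg _) (Finset.mem_univ j) |>.trans_eq (by simp [Real.dist_eq])

lemma prod_ite_ofReal (d : ℕ) (j : Fin d) (t ε : ℝ) (ht : 0 ≤ t) (hε : 0 ≤ ε) :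
    ∏ i : Fin d, ENNReal.ofReal (if i = j then t else ε)
      = ENNReal.ofReal (t * ε ^ (d - 1)) := by
  rw [← Finset.mul_prod_erase Finset.univ _ (Finset.mem_univ j), if_pos rfl]
  rw [Finset.prod_congr rfl (fun i hi => by rw [if_neg (Finset.ne_of_mem_erase hi)]),
    Finset.prod_const, Finset.card_erase_of_mem (Finset.mem_univ j), Finset.card_univ,
    Fintype.card_fin, ENNReal.ofReal_mul ht, ENNReal.ofReal_pow hε]

theorem boundary_distance_integral_lower_bound (d : ℕ) (hd : 1 ≤ d) :
    ∃ c : ℝ, 0 < c ∧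
      ∀ (ε : ℝ) (a : Fin d → ℝ), 0 < ε →
      ∀ μ : Measure (EuclideanSpace ℝ (Fin d)),
        μ {x : EuclideanSpace ℝ (Fin d) | ∀ i, x i ∈ Icc (a i) (a i + ε)}ᶜ = 0 →
        ∀ L : ℝ, 0 < L →
        (∀ A : Set (EuclideanSpace ℝ (Fin d)), MeasurableSet A →
          μ A ≤ ENNReal.ofReal L * volume A) →
        ∀ m : ℝ, 0 ≤ m →
        μ {x : EuclideanSpace ℝ (Fin d) | ∀ i, x i ∈ Icc (a i) (a i + ε)}
          = ENNReal.ofReal m →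
        ENNReal.ofReal (c * m ^ 2 / (L * ε ^ (d - 1)))
          ≤ ∫⁻ x in {x : EuclideanSpace ℝ (Fin d) | ∀ i, x i ∈ Icc (a i) (a i + ε)},
              ENNReal.ofReal
                (Metric.infDist x
                  (frontier {x : EuclideanSpace ℝ (Fin d) | ∀ i, x i ∈ Icc (a i) (a i + ε)}))
              ∂μ := by
  have hd0 : (0:ℝ) < d := by exact_mod_cast Nat.lt_of_lt_of_le Nat.zero_lt_one hd
  refine ⟨1/(8*d), div_pos one_pos (by linarith), ?_⟩
  intro ε a hε μ hμc L hL hAC m hm hμQ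
  set Q := {x : EuclideanSpace ℝ (Fin d) | ∀ i, x i ∈ Icc (a i) (a i + ε)} with hQdef
  set t : ℝ := m / (4*d*L*ε^(d-1)) with htdef
  have hεp : (0:ℝ) < ε^(d-1) := by positivity
  have ht0 : 0 ≤ t := div_nonneg hm (by positivity)
  -- Q is closed
  have hQclosed : IsClosed Q := by
    have h : Q = ⋂ i, (fun x : EuclideanSpace ℝ (Fin d) => x i) ⁻¹' Icc (a i) (a i + ε) := by
      ext x; simp [hQdef]
    rw [h]
    exact isClosed_iInter fun i => isClosed_Icc.preimage ((continuous_apply i).comp (PiLp.continuous_ofLp 2 _))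
  -- the open box is included in the interior
  have hOint : {x : EuclideanSpace ℝ (Fin d) | ∀ i, x i ∈ Ioo (a i) (a i + ε)} ⊆ interior Q := by
    apply interior_maximal
    · intro x hx i; exact ⟨(hx i).1.le, (hx i).2.le⟩
    · have h : {x : EuclideanSpace ℝ (Fin d) | ∀ i, x i ∈ Ioo (a i) (a i + ε)}
          = ⋂ i, (fun x : EuclideanSpace ℝ (Fin d) => x i) ⁻¹' Ioo (a i) (a i + ε) := by
        ext x; simp
      rw [h]
      exact isOpen_iInter_of_finite fun i => isOpen_Ioo.preimage ((continuous_apply i).comp (PiLp.continuous_ofLp 2 _))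
  -- frontier points have a boundary coordinate
  have hfrontier : ∀ y ∈ frontier Q, y ∈ Q ∧ ∃ j, y j = a j ∨ y j = a j + ε := by
    intro y hy
    have hyQ : y ∈ Q := by
      have := hy.1
      rwa [hQclosed.closure_eq] at this
    refine ⟨hyQ, ?_⟩
    have hynint : y ∉ interior Q := hy.2
    have : ¬ ∀ i, y i ∈ Ioo (a i) (a i + ε) := fun h => hynint (hOint h)
    push_neg at this
    obtain ⟨j, hj⟩ := this
    refine ⟨j, ?_⟩
    rcases (hyQ j) with ⟨h1, h2⟩
    rw [mem_Ioo, not_and_or] at hj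
    rcases hj with hj | hj
    · left; push_neg at hj; linarith
    · right; push_neg at hj; linarith
  -- the frontier is nonempty (the corner `a` belongs to it)
  have hFne : (frontier Q).Nonempty := by
    set j0 : Fin d := ⟨0, hd⟩
    set p : EuclideanSpace ℝ (Fin d) := WithLp.toLp 2 (fun i => a i) with hp
    refine ⟨p, ?_, ?_⟩
    · exact subset_closure (fun i => ⟨le_refl _, by linarith⟩)
    · intro hint
      rw [mem_interior_iff_mem_nhds, Metric.mem_nhds_iff] at hint
      obtain ⟨δ, hδ, hball⟩ := hint
      have hy : p - EuclideanSpace.single j0 (δ/2) ∈ Metric.ball p δ := by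
        rw [Metric.mem_ball, dist_self_sub_left, EuclideanSpace.norm_single,
          Real.norm_eq_abs, abs_of_pos (by linarith)]
        linarith
      have hmem := hball hy
      have h1 := (hmem j0).1
      have h2 : (p - EuclideanSpace.single j0 (δ/2)) j0 = a j0 - δ/2 := by
        simp [hp, EuclideanSpace.single_apply]
      rw [h2] at h1
      linarith
  -- the good set S
  set S := {x : EuclideanSpace ℝ (Fin d) | ∀ i, x i ∈ Icc (a i + t) (a i + ε - t)} with hSdef
  have hSsubQ : S ⊆ Q := by
    intro x hx i
    rcases hx i with ⟨h1, h2⟩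
    exact ⟨by linarith, by linarith⟩
  have hSclosed : IsClosed S := by
    have h : S = ⋂ i, (fun x : EuclideanSpace ℝ (Fin d) => x i) ⁻¹' Icc (a i + t) (a i + ε - t) := by
      ext x; simp [hSdef]
    rw [h]
    exact isClosed_iInter fun i => isClosed_Icc.preimage ((continuous_apply i).comp (PiLp.continuous_ofLp 2 _))
  -- lower bound for the distance to the frontier on S
  have hinf : ∀ x ∈ S, ENNReal.ofReal t
      ≤ ENNReal.ofReal (Metric.infDist x (frontier Q)) := by
    intro x hx
    apply ENNReal.ofReal_le_ofReal
    by_contra hcon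
    push_neg at hcon
    rw [Metric.infDist_lt_iff hFne] at hcon
    obtain ⟨y, hy, hlt⟩ := hcon
    obtain ⟨hyQ, j, hj⟩ := hfrontier y hy
    have hco := coord_abs_le_dist d x y j
    rcases hx j with ⟨h1, h2⟩
    rcases hj with hj | hj
    · rw [hj, abs_of_nonneg (by linarith)] at hco; linarith
    · rw [hj, abs_of_nonpos (by linarith)] at hco; linarith
  -- the bad set is covered by 2d slabs
  have hBsub : Q \ S ⊆ ⋃ j : Fin d,
      ({x : EuclideanSpace ℝ (Fin d) | ∀ i, x i ∈ Icc (a i) (a i + (if i = j then t else ε))}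
        ∪ {x : EuclideanSpace ℝ (Fin d) |
            ∀ i, x i ∈ Icc (a i + (if i = j then ε - t else 0)) (a i + ε)}) := by
    rintro x ⟨hxQ, hxS⟩
    have : ¬ ∀ i, x i ∈ Icc (a i + t) (a i + ε - t) := hxS
    push_neg at this
    obtain ⟨j, hj⟩ := this
    rw [mem_Icc, not_and_or] at hj
    refine mem_iUnion.mpr ⟨j, ?_⟩
    rcases hj with hj | hj
    · push_neg at hj
      left
      intro i
      rcases hxQ i with ⟨h1, h2⟩
      by_cases hij : i = j
      · subst hij; rw [if_pos rfl]; exact ⟨h1, by linarith⟩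
      · rw [if_neg hij]; exact ⟨h1, h2⟩
    · push_neg at hj
      right
      intro i
      rcases hxQ i with ⟨h1, h2⟩
      by_cases hij : i = j
      · subst hij; rw [if_pos rfl]; exact ⟨by linarith, h2⟩
      · rw [if_neg hij]; exact ⟨by linarith, h2⟩
  -- volume of each slab
  have hvol1 : ∀ j : Fin d,
      volume {x : EuclideanSpace ℝ (Fin d) | ∀ i, x i ∈ Icc (a i) (a i + (if i = j then t else ε))}
        = ENNReal.ofReal (t * ε ^ (d - 1)) := by
    intro j
    rw [vol_box]
    rw [show (fun i => ENNReal.ofReal (a i + (if i = j then t else ε) - a i))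
        = fun i => ENNReal.ofReal (if i = j then t else ε) by funext i; ring_nf]
    exact prod_ite_ofReal d j t ε ht0 hε.le
  have hvol2 : ∀ j : Fin d,
      volume {x : EuclideanSpace ℝ (Fin d) |
          ∀ i, x i ∈ Icc (a i + (if i = j then ε - t else 0)) (a i + ε)}
        = ENNReal.ofReal (t * ε ^ (d - 1)) := by
    intro j
    rw [vol_box]
    rw [show (fun i => ENNReal.ofReal (a i + ε - (a i + (if i = j then ε - t else 0))))
        = fun i => ENNReal.ofReal (if i = j then t else ε) by
      funext i; congr 1; by_cases hij : i = j <;> simp [hij]]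
    exact prod_ite_ofReal d j t ε ht0 hε.le
  -- volume of the bad set
  have hvolB : volume (Q \ S) ≤ (d : ℝ≥0∞) * (2 * ENNReal.ofReal (t * ε ^ (d - 1))) := by
    calc volume (Q \ S) ≤ _ := measure_mono hBsub
      _ ≤ ∑' j : Fin d, volume
          ({x : EuclideanSpace ℝ (Fin d) | ∀ i, x i ∈ Icc (a i) (a i + (if i = j then t else ε))}
          ∪ {x : EuclideanSpace ℝ (Fin d) |
              ∀ i, x i ∈ Icc (a i + (if i = j then ε - t else 0)) (a i + ε)}) :=
        measure_iUnion_le _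
      _ = ∑ j : Fin d, volume _ := tsum_fintype _
      _ ≤ ∑ j : Fin d, (2 * ENNReal.ofReal (t * ε ^ (d - 1))) := by
          apply Finset.sum_le_sum
          intro j _
          calc volume _ ≤ _ := measure_union_le _ _
            _ = 2 * ENNReal.ofReal (t * ε ^ (d - 1)) := by
                rw [hvol1 j, hvol2 j, two_mul]
      _ = (d : ℝ≥0∞) * (2 * ENNReal.ofReal (t * ε ^ (d - 1))) := by
          rw [Finset.sum_const, Finset.card_univ, Fintype.card_fin, nsmul_eq_mul]
  -- measure of the bad set
  have hμB : μ (Q \ S) ≤ ENNReal.ofReal (m / 2) := by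
    have hmeas : MeasurableSet (Q \ S) :=
      hQclosed.measurableSet.diff hSclosed.measurableSet
    calc μ (Q \ S) ≤ ENNReal.ofReal L * volume (Q \ S) := hAC _ hmeas
      _ ≤ ENNReal.ofReal L * ((d : ℝ≥0∞) * (2 * ENNReal.ofReal (t * ε ^ (d - 1)))) :=
          mul_le_mul_right hvolB _
      _ = ENNReal.ofReal (L * ((d : ℝ) * (2 * (t * ε ^ (d - 1))))) := by
          rw [show ((2:ℝ≥0∞)) = ENNReal.ofReal (2:ℝ) by norm_num,
            show ((d:ℝ≥0∞)) = ENNReal.ofReal (d:ℝ) by simp,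
            ← ENNReal.ofReal_mul (by norm_num : (0:ℝ) ≤ 2),
            ← ENNReal.ofReal_mul (by positivity : (0:ℝ) ≤ (d:ℝ)),
            ← ENNReal.ofReal_mul hL.le]
      _ = ENNReal.ofReal (m / 2) := by
          congr 1
          rw [htdef]
          field_simp
          ring
  -- measure of the good set
  have hμS : ENNReal.ofReal (m / 2) ≤ μ S := by
    have hsplit : ENNReal.ofReal m ≤ μ S + μ (Q \ S) := by
      rw [← hμQ]
      calc μ Q ≤ μ (S ∪ (Q \ S)) := measure_mono (fun x hx => by
            by_cases hxS : x ∈ S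
            · exact Or.inl hxS
            · exact Or.inr ⟨hx, hxS⟩)
        _ ≤ μ S + μ (Q \ S) := measure_union_le _ _
    have h2 : ENNReal.ofReal (m/2) + ENNReal.ofReal (m/2) ≤ μ S + ENNReal.ofReal (m/2) := by
      rw [← ENNReal.ofReal_add (by linarith) (by linarith)]
      calc ENNReal.ofReal (m/2 + m/2) = ENNReal.ofReal m := by norm_num
        _ ≤ μ S + μ (Q \ S) := hsplit
        _ ≤ μ S + ENNReal.ofReal (m/2) := add_le_add_right hμB _
    exact (ENNReal.add_le_add_iff_right ENNReal.ofReal_ne_top).mp h2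
  -- final chain
  have hmeasf : Measurable fun x : EuclideanSpace ℝ (Fin d) =>
      ENNReal.ofReal (Metric.infDist x (frontier Q)) :=
    (Metric.continuous_infDist_pt (frontier Q)).measurable.ennreal_ofReal
  calc ENNReal.ofReal (1/(8*d) * m ^ 2 / (L * ε ^ (d - 1)))
      = ENNReal.ofReal (t * (m/2)) := by
        congr 1
        rw [htdef]
        field_simp
        ring
    _ = ENNReal.ofReal t * ENNReal.ofReal (m/2) := ENNReal.ofReal_mul ht0
    _ ≤ ENNReal.ofReal t * μ S := mul_le_mul_right hμS _
    _ = ∫⁻ _ in S, ENNReal.ofReal t ∂μ := (setLIntegral_const S _).symm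
    _ ≤ ∫⁻ x in S, ENNReal.ofReal (Metric.infDist x (frontier Q)) ∂μ :=
        setLIntegral_mono hmeasf hinf
    _ ≤ ∫⁻ x in Q, ENNReal.ofReal (Metric.infDist x (frontier Q)) ∂μ :=
        lintegral_mono_set hSsubQ
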